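/- Let f be an expansive homeomorphism of a compact metric space X. Then there is a metric D on X compatible with its topology such that for every A ≥ 1 there exist δ > 0 and a positive integer N such that for any x ∈ X and any y with D(f^{iN}(x), f^{iN}(y)) ≤ δ for all i ≥ 0, one has D(f^{-N}(x), f^{-N}(y)) ≥ A·D(x,y) and D(f^{iN}(x), f^{iN}(y)) ≤ A^{-i}·D(x,y) for all i ≥ 0. -/

import Mathlib

open Filter Topology

/-- The `n`-th iterate (`n ∈ ℤ`) of a homeomorphism `f`, as a map `X → X`. -/
def iterZ {X : Type*} [TopologicalSpace X] (f : X ≃ₜ X) (n : ℤ) : X → X :=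
  ⇑(f.toEquiv ^ n)

/-- The ω-limit set of `x`: limits of `f^{nᵢ}(x)` along strictly increasing
sequences `0 < n₁ < n₂ < ⋯`. -/
def posLimitSet {X : Type*} [TopologicalSpace X] (f : X ≃ₜ X) (x : X) : Set X :=
  {y | ∃ n : ℕ → ℕ, StrictMono n ∧ 0 < n 0 ∧
    Tendsto (fun i => iterZ f (n i) x) atTop (𝓝 y)}

/-- The α-limit set of `x`: limits of `f^{-nᵢ}(x)` along strictly increasing
sequences `0 < n₁ < n₂ < ⋯`. -/
def negLimitSet {X : Type*} [TopologicalSpace X] (f : X ≃ₜ X) (x : X) : Set X :=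
  {y | ∃ n : ℕ → ℕ, StrictMono n ∧ 0 < n 0 ∧
    Tendsto (fun i => iterZ f (-(n i : ℤ)) x) atTop (𝓝 y)}

/-- `x` is recurrent if it is positively or negatively recurrent. -/
def RecurrentPt {X : Type*} [TopologicalSpace X] (f : X ≃ₜ X) (x : X) : Prop :=
  x ∈ posLimitSet f x ∨ x ∈ negLimitSet f x

/-- `f` is expansive with expansivity constant `c`. -/
def ExpansiveWith {X : Type*} [MetricSpace X] (f : X ≃ₜ X) (c : ℝ) : Prop :=
  0 < c ∧ ∀ x y : X, x ≠ y → ∃ n : ℤ, c < dist (iterZ f n x) (iterZ f n y)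

/-- `f` is expansive. -/
def Expansive {X : Type*} [MetricSpace X] (f : X ≃ₜ X) : Prop :=
  ∃ c : ℝ, ExpansiveWith f c

/-- The full orbit `{fⁿ(x) : n ∈ ℤ}` of a point. -/
def fullOrbit {X : Type*} [TopologicalSpace X] (f : X ≃ₜ X) (x : X) : Set X :=
  Set.range fun n : ℤ => iterZ f n x

/-- `E` is a minimal set: nonempty, closed, invariant (`f(E) = E`), with no proper
nonempty closed invariant subset. -/
def IsMinimalSet {X : Type*} [TopologicalSpace X] (f : X ≃ₜ X) (E : Set X) : Prop :=
  E.Nonempty ∧ IsClosed E ∧ f '' E = E ∧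
    ∀ E' ⊆ E, E'.Nonempty → IsClosed E' → f '' E' = E' → E' = E

/-- `x` is almost periodic: the closure of its orbit is a minimal set. -/
def AlmostPeriodicPt {X : Type*} [TopologicalSpace X] (f : X ≃ₜ X) (x : X) : Prop :=
  IsMinimalSet f (closure (fullOrbit f x))

/-- The left shift `σ` on `ℤ → F`, as a homeomorphism. -/
def shiftH (F : Type*) [TopologicalSpace F] : (ℤ → F) ≃ₜ (ℤ → F) where
  toFun x n := x (n + 1)
  invFun x n := x (n - 1)
  left_inv x := by funext n; simp
  right_inv x := by funext n; simp
  continuous_toFun := continuous_pi fun n => continuous_apply (n + 1)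
  continuous_invFun := continuous_pi fun n => continuous_apply (n - 1)

/-- The `n`-th power (`n ∈ ℕ`) of a homeomorphism, as a homeomorphism. -/
def hpow {X : Type*} [TopologicalSpace X] (f : X ≃ₜ X) : ℕ → X ≃ₜ X
  | 0 => Homeomorph.refl X
  | n + 1 => (hpow f n).trans f

/-- The local stable set `W^s_ε(x)`. -/
def localStable {X : Type*} [MetricSpace X] (f : X ≃ₜ X) (ε : ℝ) (x : X) : Set X :=
  {y | ∀ n : ℕ, dist (iterZ f n x) (iterZ f n y) ≤ ε}

/-- The local unstable set `W^u_ε(x)`. -/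
def localUnstable {X : Type*} [MetricSpace X] (f : X ≃ₜ X) (ε : ℝ) (x : X) : Set X :=
  {y | ∀ n : ℕ, dist (iterZ f (-(n : ℤ)) x) (iterZ f (-(n : ℤ)) y) ≤ ε}

/-- The stable set `W^s(x)`. -/
def stableSet {X : Type*} [MetricSpace X] (f : X ≃ₜ X) (x : X) : Set X :=
  {y | Tendsto (fun n : ℕ => dist (iterZ f n x) (iterZ f n y)) atTop (𝓝 0)}

/-- The unstable set `W^u(x)`. -/
def unstableSet {X : Type*} [MetricSpace X] (f : X ≃ₜ X) (x : X) : Set X :=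
  {y | Tendsto (fun n : ℕ => dist (iterZ f (-(n : ℤ)) x) (iterZ f (-(n : ℤ)) y)) atTop (𝓝 0)}

/-- `f` has the pseudo orbit tracing property. -/
def POTP {X : Type*} [MetricSpace X] (f : X ≃ₜ X) : Prop :=
  ∀ ε > (0 : ℝ), ∃ δ > (0 : ℝ), ∀ u : ℤ → X,
    (∀ i : ℤ, dist (f (u i)) (u (i + 1)) < δ) →
    ∃ x : X, ∀ i : ℤ, dist (iterZ f i x) (u i) < ε

/-- `dD` is a metric on `X` compatible with the topology of `X`: it satisfies the metric
axioms and the open sets of `X` are exactly the sets that are open for `dD`. -/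
def IsCompatibleMetric {X : Type*} [TopologicalSpace X] (dD : X → X → ℝ) : Prop :=
  (∀ x y : X, dD x y = 0 ↔ x = y) ∧
  (∀ x y : X, dD x y = dD y x) ∧
  (∀ x y z : X, dD x z ≤ dD x y + dD y z) ∧
  (∀ s : Set X, IsOpen s ↔ ∀ x ∈ s, ∃ ε > (0 : ℝ), {y : X | dD x y < ε} ⊆ s)

/-!
Fathi's hyperbolic metric. Fix an expansivity constant `c` and let `n(x, y)` be the first `n` such
that the orbits of `x` and `y` are more than `c` apart at some time in `[-n, n]`. By compactness,
orbits that stay `c`-close on `[-k, k]` are `c/2`-close at time `0` for some `k`, so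
`n(x, z) ≥ min (n(x, y), n(y, z)) - k`. Hence `ρ = θ ^ n` satisfies the four-point inequality of
Frink's metrization lemma once `θ ^ (2k) ≥ 1/2`, and the chain metric `D` built from `ρ` satisfies
`ρ / 2 ≤ D ≤ ρ`. The window `[-n, n]` is covered by the windows of radius `n - M` around times
`M` and `-M`, so one of the two separation times of `f^{±M} x, f^{±M} y` is at most `n - M`: `D` is
expanded by `θ ^ (-M) / 2` under `f^M` or under `f^{-M}`. Along a forward orbit on which `D` stays
small the expansion can then only happen backwards, since otherwise `D` would grow geometrically.
-/

open scoped NNReal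

section Iterates

variable {X : Type*} [TopologicalSpace X] (f : X ≃ₜ X)

theorem iterZ_eq_coe_zpow (n : ℤ) : iterZ f n = ⇑(f ^ n) := by
  let φ : (X ≃ₜ X) →* Equiv.Perm X :=
    { toFun := Homeomorph.toEquiv, map_one' := rfl, map_mul' := fun _ _ => rfl }
  exact congrArg DFunLike.coe (map_zpow φ f n).symm

theorem iterZ_iterZ (m n : ℤ) (x : X) : iterZ f m (iterZ f n x) = iterZ f (m + n) x := by
  simp only [iterZ_eq_coe_zpow, zpow_add, Homeomorph.mul_apply]

theorem continuous_iterZ (n : ℤ) : Continuous (iterZ f n) := by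
  rw [iterZ_eq_coe_zpow]
  exact (f ^ n).continuous

@[simp]
theorem iterZ_zero (x : X) : iterZ f 0 x = x := rfl

theorem iterZ_natCast_mul_succ (N i : ℕ) (x : X) :
    iterZ f N (iterZ f (i * N) x) = iterZ f ((i + 1 : ℕ) * N) x := by
  rw [iterZ_iterZ]
  push_cast
  ring_nf

theorem iterZ_neg_natCast_mul_succ (N i : ℕ) (x : X) :
    iterZ f (-N) (iterZ f ((i + 1 : ℕ) * N) x) = iterZ f (i * N) x := by
  rw [iterZ_iterZ]
  push_cast
  ring_nf

end Iterates

theorem isCompatibleMetric_of_uniformlyEquivalent {X : Type*} [MetricSpace X] {D : X → X → ℝ}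
    (hD₀ : ∀ x y, D x y = 0 ↔ x = y) (hDcomm : ∀ x y, D x y = D y x)
    (hDtri : ∀ x y z, D x z ≤ D x y + D y z)
    (hD_dist : ∀ ε > 0, ∃ η > 0, ∀ x y, D x y < η → dist x y < ε)
    (hdist_D : ∀ ε > 0, ∃ δ > 0, ∀ x y, dist x y < δ → D x y < ε) : IsCompatibleMetric D := by
  refine ⟨hD₀, hDcomm, hDtri, fun s => ⟨fun hs x hx => ?_, fun hs => Metric.isOpen_iff.2 ?_⟩⟩
  · obtain ⟨r, hr, hball⟩ := Metric.isOpen_iff.1 hs x hx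
    obtain ⟨η, hη, hηr⟩ := hD_dist r hr
    exact ⟨η, hη, fun y hy => hball (by rw [Metric.mem_ball, dist_comm]; exact hηr x y hy)⟩
  · intro x hx
    obtain ⟨ε, hε, hsub⟩ := hs x hx
    obtain ⟨δ, hδ, hδε⟩ := hdist_D ε hε
    exact ⟨δ, hδ, fun y hy => hsub (hδε x y (by rwa [Metric.mem_ball, dist_comm] at hy))⟩

theorem mul_le_of_mul_le_max_of_bounded {g : ℕ → ℝ} {Λ δ : ℝ} (hΛ : 1 < Λ) (hg₀ : ∀ i, 0 ≤ g i)
    (hgδ : ∀ i, g i ≤ δ) (hg : ∀ i, Λ * g (i + 1) ≤ max (g (i + 2)) (g i)) (i : ℕ) :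
    Λ * g (i + 1) ≤ g i := by
  -- Otherwise `g` grows geometrically from `i` on.
  by_contra! hgrow
  have hpos : 0 < g (i + 1) := by nlinarith [hg₀ i]
  have hgeom : ∀ j, g (i + j) < Λ * g (i + j + 1) ∧ Λ ^ j * g (i + 1) ≤ g (i + j + 1) := by
    intro j
    induction j with
    | zero => simpa using hgrow
    | succ j ih =>
      have hstep : Λ * g (i + j + 1) ≤ g (i + j + 2) := by
        have := hg (i + j)
        rw [max_def] at this
        split_ifs at this <;> linarith [ih.1]
      have hpos' : 0 < g (i + j + 1) := lt_of_lt_of_le (by positivity) ih.2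
      refine ⟨?_, ?_⟩
      · show g (i + j + 1) < Λ * g (i + j + 2)
        nlinarith [mul_lt_mul_of_pos_right hΛ hpos']
      calc Λ ^ (j + 1) * g (i + 1) = Λ * (Λ ^ j * g (i + 1)) := by ring
        _ ≤ Λ * g (i + j + 1) := by gcongr; exact ih.2
        _ ≤ g (i + (j + 1) + 1) := hstep
  obtain ⟨j, hj⟩ := pow_unbounded_of_one_lt (δ / g (i + 1)) hΛ
  rw [div_lt_iff₀ hpos] at hj
  linarith [(hgeom j).2, hgδ (i + j + 1)]

theorem hyperbolic_of_expand_forward_or_backward {X : Type*} [TopologicalSpace X] (f : X ≃ₜ X)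
    {D : X → X → ℝ} (hD : ∀ x y, 0 ≤ D x y)
    (hexpand : ∀ Λ : ℝ, ∃ N : ℕ, 0 < N ∧ ∃ δ > (0 : ℝ), ∀ u v, D u v ≤ δ →
      Λ * D u v ≤ max (D (iterZ f N u) (iterZ f N v)) (D (iterZ f (-N) u) (iterZ f (-N) v)))
    (A : ℝ) (hA : 1 ≤ A) :
    ∃ δ > (0 : ℝ), ∃ N : ℕ, 0 < N ∧
      ∀ x y : X,
        (∀ i : ℕ, D (iterZ f (i * N) x) (iterZ f (i * N) y) ≤ δ) →
        A * D x y ≤ D (iterZ f (-(N : ℤ)) x) (iterZ f (-(N : ℤ)) y) ∧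
        ∀ i : ℕ, D (iterZ f (i * N) x) (iterZ f (i * N) y) ≤ (A ^ i)⁻¹ * D x y := by
  obtain ⟨N, hN, δ, hδ, hΛ⟩ := hexpand (A + 1)
  refine ⟨δ, hδ, N, hN, fun x y hclose => ?_⟩
  set g : ℕ → ℝ := fun i => D (iterZ f (i * N) x) (iterZ f (i * N) y) with hg
  have hg0 : g 0 = D x y := by simp [hg]
  have hstep (i : ℕ) : (A + 1) * g (i + 1) ≤ max (g (i + 2)) (g i) := by
    have := hΛ _ _ (hclose (i + 1))
    rwa [iterZ_natCast_mul_succ, iterZ_natCast_mul_succ, iterZ_neg_natCast_mul_succ,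
      iterZ_neg_natCast_mul_succ] at this
  have hg_nonneg (i : ℕ) : 0 ≤ g i := hD _ _
  have hcontract (i : ℕ) : (A + 1) * g (i + 1) ≤ g i :=
    mul_le_of_mul_le_max_of_bounded (by linarith) hg_nonneg hclose hstep i
  have hA₀ : 0 ≤ A + 1 := by linarith
  refine ⟨?_, fun i => ?_⟩
  · have h0 : (A + 1) * g 0 ≤ max (g 1) (D (iterZ f (-N) x) (iterZ f (-N) y)) := by
      simpa [hg] using hΛ x y (by simpa using hclose 0)
    rw [← hg0]
    rcases le_max_iff.1 h0 with h | h
    · have hg0_le : g 0 ≤ 0 := by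
        nlinarith [mul_le_mul_of_nonneg_left h hA₀, hcontract 0, hg_nonneg 0, hg_nonneg 1]
      nlinarith [hg_nonneg 0, hD (iterZ f (-N) x) (iterZ f (-N) y)]
    · nlinarith [hg_nonneg 0]
  · have hdecay (i : ℕ) : A ^ i * g i ≤ g 0 := by
      induction i with
      | zero => simp
      | succ i ih =>
        calc A ^ (i + 1) * g (i + 1) = A ^ i * (A * g (i + 1)) := by ring
          _ ≤ A ^ i * g i := by gcongr; linarith [hcontract i, hg_nonneg (i + 1)]
          _ ≤ g 0 := ih
    show g i ≤ (A ^ i)⁻¹ * D x y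
    rw [← hg0, inv_mul_eq_div, le_div_iff₀ (by positivity), mul_comm]
    exact hdecay i

theorem NNReal.exists_pos_lt_one_one_le_two_mul_pow (m : ℕ) :
    ∃ θ : ℝ≥0, 0 < θ ∧ θ < 1 ∧ 1 ≤ 2 * θ ^ m := by
  set θ : ℝ≥0 := 2⁻¹ ^ (((m + 1 : ℕ) : ℝ)⁻¹)
  have hθ₁ : θ < 1 := NNReal.rpow_lt_one (by norm_num) (by positivity)
  refine ⟨θ, NNReal.rpow_pos (by norm_num), hθ₁, ?_⟩
  calc (1 : ℝ≥0) = 2 * θ ^ (m + 1) := by rw [NNReal.rpow_inv_natCast_pow _ m.succ_ne_zero]; simp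
    _ ≤ 2 * θ ^ m :=
      mul_le_mul_of_nonneg_left (pow_le_pow_of_le_one zero_le hθ₁.le (by omega)) zero_le

section SeparationTime

variable {X : Type*} [MetricSpace X] {f : X ≃ₜ X} {c : ℝ}

def OrbitsClose (f : X ≃ₜ X) (c : ℝ) (n : ℕ) (x y : X) : Prop :=
  ∀ j : ℤ, |j| ≤ n → dist (iterZ f j x) (iterZ f j y) ≤ c

theorem OrbitsClose.mono {m n : ℕ} {x y : X} (h : OrbitsClose f c n x y) (hmn : m ≤ n) :
    OrbitsClose f c m x y :=
  fun j hj => h j (hj.trans (by exact_mod_cast hmn))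

theorem OrbitsClose.symm {n : ℕ} {x y : X} (h : OrbitsClose f c n x y) :
    OrbitsClose f c n y x :=
  fun j hj => dist_comm (iterZ f j y) (iterZ f j x) ▸ h j hj

theorem OrbitsClose.shift {m n : ℕ} {x y : X} (h : OrbitsClose f c (m + n) x y) {j : ℤ}
    (hj : |j| ≤ m) : OrbitsClose f c n (iterZ f j x) (iterZ f j y) := by
  intro i hi
  rw [iterZ_iterZ, iterZ_iterZ]
  refine h (i + j) ((abs_add_le i j).trans ?_)
  push_cast
  linarith

theorem OrbitsClose.of_shift_of_shift_neg {n M : ℕ} {x y : X} (hM : M ≤ n)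
    (hfwd : OrbitsClose f c n (iterZ f M x) (iterZ f M y))
    (hbwd : OrbitsClose f c n (iterZ f (-M) x) (iterZ f (-M) y)) :
    OrbitsClose f c (n + M) x y := by
  intro i hi
  rw [abs_le] at hi
  push_cast at hi
  rcases le_total 0 i with hi₀ | hi₀
  · simpa only [iterZ_iterZ, sub_add_cancel] using hfwd (i - M) (by rw [abs_le]; omega)
  · simpa only [iterZ_iterZ, add_neg_cancel_right] using hbwd (i + M) (by rw [abs_le]; omega)

theorem isClosed_orbitsClose (f : X ≃ₜ X) (c : ℝ) (n : ℕ) :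
    IsClosed {p : X × X | OrbitsClose f c n p.1 p.2} := by
  simp only [OrbitsClose, Set.ofPred_forall]
  exact isClosed_iInter fun j => isClosed_iInter fun _ => isClosed_le
    (((continuous_iterZ f j).comp continuous_fst).dist
      ((continuous_iterZ f j).comp continuous_snd)) continuous_const

theorem ExpansiveWith.not_forall_orbitsClose (hc : ExpansiveWith f c) {x y : X} (hxy : x ≠ y) :
    ¬ ∀ n, OrbitsClose f c n x y := by
  obtain ⟨j, hj⟩ := hc.2 x y hxy
  exact fun h => (h j.natAbs j (by rw [Int.abs_eq_natAbs])).not_gt hj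

theorem ExpansiveWith.exists_orbitsClose_imp_dist_le [CompactSpace X] (hc : ExpansiveWith f c)
    {ε : ℝ} (hε : 0 < ε) : ∃ k : ℕ, ∀ x y : X, OrbitsClose f c k x y → dist x y ≤ ε := by
  by_contra! hbad
  let t : ℕ → Set (X × X) := fun n => {p | ε ≤ dist p.1 p.2} ∩ {p | OrbitsClose f c n p.1 p.2}
  have ht_closed (n : ℕ) : IsClosed (t n) :=
    (isClosed_le continuous_const continuous_dist).inter (isClosed_orbitsClose f c n)
  obtain ⟨p, hp⟩ := IsCompact.nonempty_iInter_of_sequence_nonempty_isCompact_isClosed t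
    (fun n => Set.inter_subset_inter_right _ fun p hp => hp.mono n.le_succ)
    (fun n => let ⟨x, y, hxy, hε⟩ := hbad n; ⟨(x, y), hε.le, hxy⟩)
    (ht_closed 0).isCompact ht_closed
  simp only [Set.mem_iInter] at hp
  have hne : p.1 ≠ p.2 := fun h => by
    have := (hp 0).1
    simp only [Set.mem_ofPred_eq, h, dist_self] at this
    linarith
  exact hc.not_forall_orbitsClose hne fun n => (hp n).2

theorem exists_dist_lt_imp_orbitsClose [CompactSpace X] (f : X ≃ₜ X) (n : ℕ) (hc : 0 < c) :
    ∃ δ > 0, ∀ x y : X, dist x y < δ → OrbitsClose f c n x y := by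
  let orbit : X → Finset.Icc (-(n : ℤ)) n → X := fun x j => iterZ f j x
  have huc : UniformContinuous orbit := CompactSpace.uniformContinuous_of_continuous
    (continuous_pi fun j => continuous_iterZ f j)
  obtain ⟨δ, hδ, h⟩ := Metric.uniformContinuous_iff.1 huc c hc
  refine ⟨δ, hδ, fun x y hxy j hj => ?_⟩
  have hj' : j ∈ Finset.Icc (-(n : ℤ)) n := Finset.mem_Icc.2 (abs_le.1 hj)
  exact (dist_le_pi_dist (orbit x) (orbit y) ⟨j, hj'⟩).trans (h hxy).le

noncomputable def separationTime (f : X ≃ₜ X) (c : ℝ) (x y : X) : ℕ :=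
  sInf {n | ¬ OrbitsClose f c n x y}

theorem separationTime_comm (f : X ≃ₜ X) (c : ℝ) (x y : X) :
    separationTime f c x y = separationTime f c y x := by
  simp only [separationTime]
  congr 1
  ext n
  exact not_congr ⟨OrbitsClose.symm, OrbitsClose.symm⟩

theorem orbitsClose_of_lt_separationTime {n : ℕ} {x y : X} (h : n < separationTime f c x y) :
    OrbitsClose f c n x y :=
  not_not.1 (Nat.notMem_of_lt_sInf h)

theorem ExpansiveWith.not_orbitsClose_separationTime (hc : ExpansiveWith f c) {x y : X}
    (hxy : x ≠ y) : ¬ OrbitsClose f c (separationTime f c x y) x y :=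
  Nat.sInf_mem (not_forall.1 (hc.not_forall_orbitsClose hxy))

theorem ExpansiveWith.lt_separationTime_iff (hc : ExpansiveWith f c) {n : ℕ} {x y : X}
    (hxy : x ≠ y) : n < separationTime f c x y ↔ OrbitsClose f c n x y := by
  refine ⟨orbitsClose_of_lt_separationTime, fun h => ?_⟩
  by_contra! hle
  exact hc.not_orbitsClose_separationTime hxy (h.mono hle)

theorem separationTime_le_of_not_orbitsClose {n : ℕ} {x y : X} (h : ¬ OrbitsClose f c n x y) :
    separationTime f c x y ≤ n :=
  Nat.sInf_le h

end SeparationTime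

section QuasiDist

variable {X : Type*} [MetricSpace X] {f : X ≃ₜ X} {c : ℝ} {k : ℕ} {θ : ℝ≥0}

theorem OrbitsClose.trans (hk : ∀ x y : X, OrbitsClose f c k x y → dist x y ≤ c / 2) {n : ℕ}
    {x y z : X} (hxy : OrbitsClose f c (n + k) x y) (hyz : OrbitsClose f c (n + k) y z) :
    OrbitsClose f c n x z := fun j hj =>
  calc dist (iterZ f j x) (iterZ f j z)
      ≤ dist (iterZ f j x) (iterZ f j y) + dist (iterZ f j y) (iterZ f j z) := dist_triangle _ _ _
    _ ≤ c / 2 + c / 2 := add_le_add (hk _ _ (hxy.shift hj)) (hk _ _ (hyz.shift hj))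
    _ = c := add_halves c

open Classical in
noncomputable def sepQuasiDist (f : X ≃ₜ X) (c : ℝ) (θ : ℝ≥0) (x y : X) : ℝ≥0 :=
  if x = y then 0 else θ ^ separationTime f c x y

theorem sepQuasiDist_self (f : X ≃ₜ X) (c : ℝ) (θ : ℝ≥0) (x : X) : sepQuasiDist f c θ x x = 0 :=
  if_pos rfl

theorem sepQuasiDist_comm (f : X ≃ₜ X) (c : ℝ) (θ : ℝ≥0) (x y : X) :
    sepQuasiDist f c θ x y = sepQuasiDist f c θ y x := by
  by_cases hxy : x = y
  · simp [hxy]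
  · simp [sepQuasiDist, hxy, Ne.symm hxy, separationTime_comm f c x y]

theorem sepQuasiDist_of_ne {x y : X} (hxy : x ≠ y) :
    sepQuasiDist f c θ x y = θ ^ separationTime f c x y :=
  if_neg hxy

theorem sepQuasiDist_pos (hθ₀ : 0 < θ) {x y : X} (hxy : x ≠ y) : 0 < sepQuasiDist f c θ x y := by
  rw [sepQuasiDist_of_ne hxy]
  positivity

theorem pow_le_sepQuasiDist (hc : 0 ≤ c) (hθ₁ : θ ≤ 1) {n : ℕ} {x y : X}
    (h : ¬ OrbitsClose f c n x y) : θ ^ n ≤ sepQuasiDist f c θ x y := by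
  have hxy : x ≠ y := by
    rintro rfl
    exact h fun j _ => (dist_self _).trans_le hc
  rw [sepQuasiDist_of_ne hxy]
  exact pow_le_pow_of_le_one θ.2 hθ₁ (separationTime_le_of_not_orbitsClose h)

theorem ExpansiveWith.sepQuasiDist_le_pow (hc : ExpansiveWith f c) (hθ₁ : θ ≤ 1) {n : ℕ}
    {x y : X} (h : OrbitsClose f c n x y) : sepQuasiDist f c θ x y ≤ θ ^ n := by
  by_cases hxy : x = y
  · simp [hxy, sepQuasiDist_self]
  rw [sepQuasiDist_of_ne hxy]
  exact pow_le_pow_of_le_one θ.2 hθ₁ ((hc.lt_separationTime_iff hxy).2 h).le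

theorem ExpansiveWith.sepQuasiDist_le_two_mul_max (hc : ExpansiveWith f c)
    (hk : ∀ x y : X, OrbitsClose f c k x y → dist x y ≤ c / 2) (hθ₁ : θ ≤ 1)
    (hθk : 1 ≤ 2 * θ ^ (2 * k)) (x₁ x₂ x₃ x₄ : X) :
    sepQuasiDist f c θ x₁ x₄ ≤ 2 * max (sepQuasiDist f c θ x₁ x₂)
      (max (sepQuasiDist f c θ x₂ x₃) (sepQuasiDist f c θ x₃ x₄)) := by
  by_cases h₁₄ : x₁ = x₄
  · simp [h₁₄, sepQuasiDist_self]
  set n := separationTime f c x₁ x₄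
  have hfar : ¬ OrbitsClose f c (n + k + k) x₁ x₂ ∨ ¬ OrbitsClose f c (n + k + k) x₂ x₃ ∨
      ¬ OrbitsClose f c (n + k + k) x₃ x₄ := by
    by_contra! hclose
    exact hc.not_orbitsClose_separationTime h₁₄
      (((hclose.1.trans hk hclose.2.1).trans hk (hclose.2.2.mono (by omega))))
  have hsmall : θ ^ n ≤ 2 * θ ^ (n + k + k) :=
    calc θ ^ n ≤ θ ^ n * (2 * θ ^ (2 * k)) := le_mul_of_one_le_right (zero_le) hθk
      _ = 2 * θ ^ (n + k + k) := by ring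
  rw [sepQuasiDist_of_ne h₁₄]
  refine hsmall.trans ?_
  gcongr
  rcases hfar with h | h | h
  · exact le_max_of_le_left (pow_le_sepQuasiDist hc.1.le hθ₁ h)
  · exact le_max_of_le_right (le_max_of_le_left (pow_le_sepQuasiDist hc.1.le hθ₁ h))
  · exact le_max_of_le_right (le_max_of_le_right (pow_le_sepQuasiDist hc.1.le hθ₁ h))

end QuasiDist

section HyperbolicDist

variable {X : Type*} [MetricSpace X] {f : X ≃ₜ X} {c : ℝ} {k : ℕ} {θ : ℝ≥0}

noncomputable abbrev hyperbolicPseudoMetric (f : X ≃ₜ X) (c : ℝ) (θ : ℝ≥0) : PseudoMetricSpace X :=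
  .ofPreNNDist (sepQuasiDist f c θ) (sepQuasiDist_self f c θ) (sepQuasiDist_comm f c θ)

noncomputable def hyperbolicDist (f : X ≃ₜ X) (c : ℝ) (θ : ℝ≥0) : X → X → ℝ :=
  (hyperbolicPseudoMetric f c θ).dist

theorem hyperbolicDist_nonneg (x y : X) : 0 ≤ hyperbolicDist f c θ x y :=
  @dist_nonneg X (hyperbolicPseudoMetric f c θ) x y

theorem hyperbolicDist_self (x : X) : hyperbolicDist f c θ x x = 0 :=
  @dist_self X (hyperbolicPseudoMetric f c θ) x

theorem hyperbolicDist_comm (x y : X) : hyperbolicDist f c θ x y = hyperbolicDist f c θ y x :=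
  @dist_comm X (hyperbolicPseudoMetric f c θ) x y

theorem hyperbolicDist_triangle (x y z : X) :
    hyperbolicDist f c θ x z ≤ hyperbolicDist f c θ x y + hyperbolicDist f c θ y z :=
  @dist_triangle X (hyperbolicPseudoMetric f c θ) x y z

theorem hyperbolicDist_le_sepQuasiDist (x y : X) :
    hyperbolicDist f c θ x y ≤ sepQuasiDist f c θ x y :=
  PseudoMetricSpace.dist_ofPreNNDist_le _ _ _ x y

theorem ExpansiveWith.sepQuasiDist_le_two_mul_hyperbolicDist (hc : ExpansiveWith f c)
    (hk : ∀ x y : X, OrbitsClose f c k x y → dist x y ≤ c / 2) (hθ₁ : θ ≤ 1)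
    (hθk : 1 ≤ 2 * θ ^ (2 * k)) (x y : X) :
    sepQuasiDist f c θ x y ≤ 2 * hyperbolicDist f c θ x y :=
  PseudoMetricSpace.le_two_mul_dist_ofPreNNDist _ _ _ (hc.sepQuasiDist_le_two_mul_max hk hθ₁ hθk)
    x y

theorem ExpansiveWith.hyperbolicDist_eq_zero_iff (hc : ExpansiveWith f c)
    (hk : ∀ x y : X, OrbitsClose f c k x y → dist x y ≤ c / 2) (hθ₀ : 0 < θ) (hθ₁ : θ ≤ 1)
    (hθk : 1 ≤ 2 * θ ^ (2 * k)) {x y : X} : hyperbolicDist f c θ x y = 0 ↔ x = y := by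
  refine ⟨fun h => ?_, fun h => h ▸ hyperbolicDist_self x⟩
  by_contra hxy
  have hpos : (0 : ℝ) < sepQuasiDist f c θ x y := sepQuasiDist_pos hθ₀ hxy
  linarith [hc.sepQuasiDist_le_two_mul_hyperbolicDist hk hθ₁ hθk x y]

theorem ExpansiveWith.exists_hyperbolicDist_lt_imp_dist_lt [CompactSpace X]
    (hc : ExpansiveWith f c) (hk : ∀ x y : X, OrbitsClose f c k x y → dist x y ≤ c / 2)
    (hθ₀ : 0 < θ) (hθ₁ : θ ≤ 1) (hθk : 1 ≤ 2 * θ ^ (2 * k)) {ε : ℝ} (hε : 0 < ε) :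
    ∃ η > 0, ∀ x y : X, hyperbolicDist f c θ x y < η → dist x y < ε := by
  obtain ⟨n, hn⟩ := hc.exists_orbitsClose_imp_dist_le (half_pos hε)
  refine ⟨θ ^ n / 2, by positivity, fun x y hxy => (hn x y ?_).trans_lt (half_lt_self hε)⟩
  by_contra hfar
  have hpow : (θ : ℝ) ^ n ≤ sepQuasiDist f c θ x y := mod_cast pow_le_sepQuasiDist hc.1.le hθ₁ hfar
  linarith [hc.sepQuasiDist_le_two_mul_hyperbolicDist hk hθ₁ hθk x y]

theorem ExpansiveWith.exists_dist_lt_imp_hyperbolicDist_lt [CompactSpace X]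
    (hc : ExpansiveWith f c) (hθ₁ : θ < 1) {ε : ℝ} (hε : 0 < ε) :
    ∃ δ > 0, ∀ x y : X, dist x y < δ → hyperbolicDist f c θ x y < ε := by
  obtain ⟨n, hn⟩ := exists_pow_lt_of_lt_one hε (show (θ : ℝ) < 1 from hθ₁)
  obtain ⟨δ, hδ, hclose⟩ := exists_dist_lt_imp_orbitsClose f n hc.1
  refine ⟨δ, hδ, fun x y hxy => ?_⟩
  calc hyperbolicDist f c θ x y ≤ sepQuasiDist f c θ x y := hyperbolicDist_le_sepQuasiDist x y
    _ ≤ (θ : ℝ) ^ n := by exact_mod_cast hc.sepQuasiDist_le_pow hθ₁.le (hclose x y hxy)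
    _ < ε := hn

theorem ExpansiveWith.isCompatibleMetric_hyperbolicDist [CompactSpace X] (hc : ExpansiveWith f c)
    (hk : ∀ x y : X, OrbitsClose f c k x y → dist x y ≤ c / 2) (hθ₀ : 0 < θ) (hθ₁ : θ < 1)
    (hθk : 1 ≤ 2 * θ ^ (2 * k)) : IsCompatibleMetric (hyperbolicDist f c θ) :=
  isCompatibleMetric_of_uniformlyEquivalent
    (fun _ _ => hc.hyperbolicDist_eq_zero_iff hk hθ₀ hθ₁.le hθk) hyperbolicDist_comm
    hyperbolicDist_triangle
    (fun _ hε => hc.exists_hyperbolicDist_lt_imp_dist_lt hk hθ₀ hθ₁.le hθk hε)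
    (fun _ hε => hc.exists_dist_lt_imp_hyperbolicDist_lt hθ₁ hε)

theorem ExpansiveWith.mul_hyperbolicDist_le_max (hc : ExpansiveWith f c)
    (hk : ∀ x y : X, OrbitsClose f c k x y → dist x y ≤ c / 2) (hθ₀ : 0 < θ) (hθ₁ : θ < 1)
    (hθk : 1 ≤ 2 * θ ^ (2 * k)) (M : ℕ) {u v : X}
    (huv : hyperbolicDist f c θ u v ≤ (θ : ℝ) ^ (2 * M) / 2) :
    ((θ : ℝ) ^ M)⁻¹ / 2 * hyperbolicDist f c θ u v ≤
      max (hyperbolicDist f c θ (iterZ f M u) (iterZ f M v))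
        (hyperbolicDist f c θ (iterZ f (-M) u) (iterZ f (-M) v)) := by
  by_cases heq : u = v
  · rw [heq, hyperbolicDist_self, mul_zero]
    exact le_max_of_le_left (hyperbolicDist_nonneg _ _)
  have hle_two_mul := hc.sepQuasiDist_le_two_mul_hyperbolicDist hk hθ₁.le hθk
  set m := separationTime f c u v
  have hd : (sepQuasiDist f c θ u v : ℝ) = (θ : ℝ) ^ m := by
    rw [sepQuasiDist_of_ne heq, NNReal.coe_pow]
  have hm : 2 * M ≤ m := by
    refine (pow_le_pow_iff_right_of_lt_one₀ (by positivity) hθ₁).1 ?_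
    linarith [hle_two_mul u v]
  have hfar : ¬ OrbitsClose f c (m - M) (iterZ f M u) (iterZ f M v) ∨
      ¬ OrbitsClose f c (m - M) (iterZ f (-M) u) (iterZ f (-M) v) := by
    by_contra! hclose
    have hmclose := OrbitsClose.of_shift_of_shift_neg (by omega) hclose.1 hclose.2
    rw [Nat.sub_add_cancel (by omega)] at hmclose
    exact hc.not_orbitsClose_separationTime heq hmclose
  have hexpand : ∀ w z : X, ¬ OrbitsClose f c (m - M) w z →
      ((θ : ℝ) ^ M)⁻¹ / 2 * hyperbolicDist f c θ u v ≤ hyperbolicDist f c θ w z := by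
    intro w z hwz
    have hpow : (θ : ℝ) ^ (m - M) ≤ sepQuasiDist f c θ w z :=
      mod_cast pow_le_sepQuasiDist hc.1.le hθ₁.le hwz
    have hshrink : ((θ : ℝ) ^ M)⁻¹ * hyperbolicDist f c θ u v ≤ (θ : ℝ) ^ (m - M) :=
      calc ((θ : ℝ) ^ M)⁻¹ * hyperbolicDist f c θ u v ≤ ((θ : ℝ) ^ M)⁻¹ * (θ : ℝ) ^ m := by
            rw [← hd]
            gcongr
            exact hyperbolicDist_le_sepQuasiDist u v
        _ = (θ : ℝ) ^ (m - M) := by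
            rw [pow_sub₀ _ (by positivity) (by omega), mul_comm]
    linarith [hle_two_mul w z]
  rcases hfar with h | h
  · exact le_max_of_le_left (hexpand _ _ h)
  · exact le_max_of_le_right (hexpand _ _ h)

theorem ExpansiveWith.exists_mul_hyperbolicDist_le_max (hc : ExpansiveWith f c)
    (hk : ∀ x y : X, OrbitsClose f c k x y → dist x y ≤ c / 2) (hθ₀ : 0 < θ) (hθ₁ : θ < 1)
    (hθk : 1 ≤ 2 * θ ^ (2 * k)) (Λ : ℝ) :
    ∃ N : ℕ, 0 < N ∧ ∃ δ > (0 : ℝ), ∀ u v : X, hyperbolicDist f c θ u v ≤ δ →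
      Λ * hyperbolicDist f c θ u v ≤
        max (hyperbolicDist f c θ (iterZ f N u) (iterZ f N v))
          (hyperbolicDist f c θ (iterZ f (-N) u) (iterZ f (-N) v)) := by
  have hθinv : 1 < (θ : ℝ)⁻¹ := (one_lt_inv₀ (mod_cast hθ₀)).2 (mod_cast hθ₁)
  obtain ⟨M, hM⟩ := pow_unbounded_of_one_lt (2 * Λ) hθinv
  have hΛ : Λ ≤ ((θ : ℝ) ^ (M + 1))⁻¹ / 2 := by
    rw [← inv_pow]
    linarith [pow_le_pow_right₀ hθinv.le (by omega : M ≤ M + 1)]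
  refine ⟨M + 1, M.succ_pos, (θ : ℝ) ^ (2 * (M + 1)) / 2, by positivity, fun u v huv => ?_⟩
  exact (mul_le_mul_of_nonneg_right hΛ (hyperbolicDist_nonneg u v)).trans
    (hc.mul_hyperbolicDist_le_max hk hθ₀ hθ₁ hθk (M + 1) huv)

end HyperbolicDist

/-- For an expansive homeomorphism there is a compatible metric `D`
such that for every `A ≥ 1` there are `δ > 0` and `N ≥ 1` with: whenever
`D(f^{iN}x, f^{iN}y) ≤ δ` for all `i ≥ 0`, one has `D(f^{-N}x, f^{-N}y) ≥ A·D(x,y)` and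
`D(f^{iN}x, f^{iN}y) ≤ A^{-i}·D(x,y)` for all `i ≥ 0`. -/
theorem stmt_16 {X : Type*} [MetricSpace X] [CompactSpace X] (f : X ≃ₜ X)
    (hexp : Expansive f) :
    ∃ dD : X → X → ℝ, IsCompatibleMetric dD ∧
      ∀ A : ℝ, 1 ≤ A → ∃ δ > (0 : ℝ), ∃ N : ℕ, 0 < N ∧
        ∀ x y : X,
          (∀ i : ℕ, dD (iterZ f (i * N) x) (iterZ f (i * N) y) ≤ δ) →
          A * dD x y ≤ dD (iterZ f (-(N : ℤ)) x) (iterZ f (-(N : ℤ)) y) ∧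
          ∀ i : ℕ, dD (iterZ f (i * N) x) (iterZ f (i * N) y) ≤ (A ^ i)⁻¹ * dD x y := by
  obtain ⟨c, hc⟩ := hexp
  obtain ⟨k, hk⟩ := hc.exists_orbitsClose_imp_dist_le (half_pos hc.1)
  obtain ⟨θ, hθ₀, hθ₁, hθk⟩ := NNReal.exists_pos_lt_one_one_le_two_mul_pow (2 * k)
  exact ⟨hyperbolicDist f c θ, hc.isCompatibleMetric_hyperbolicDist hk hθ₀ hθ₁ hθk,
    hyperbolic_of_expand_forward_or_backward f hyperbolicDist_nonneg
      (hc.exists_mul_hyperbolicDist_le_max hk hθ₀ hθ₁ hθk)⟩
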